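/- Let P₀ and P₁ be probability measures on ℝ with cdfs F₀, F₁ and quantile functions F₀⁻¹, F₁⁻¹. Let J be the pushforward of Lebesgue measure on (0,1) under u ↦ (F₀⁻¹(u), F₁⁻¹(u)) (the comonotone coupling). Then J has first marginal P₀ and second marginal P₁, and J((−∞, x] × (−∞, y]) = min(F₀(x), F₁(y)) for all x, y ∈ ℝ; that is, the comonotone coupling attains the Fréchet–Hoeffding upper bound. -/

import Mathlib

/-!
For `u ∈ (0, 1)` the quantile function is a Galois inverse of the cdf: `F⁻¹(u) ≤ x ↔ u ≤ F(x)`,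
because right-continuity of `F` puts `F⁻¹(u)` itself into `{y | u ≤ F y}`. Hence, inside `(0, 1)`,
the preimage of `(-∞, x] × (-∞, y]` under `u ↦ (F₀⁻¹(u), F₁⁻¹(u))` is `(0, min (F₀ x) (F₁ y)]`,
whose Lebesgue measure is `min (F₀ x) (F₁ y)`; the one-dimensional case identifies the marginals.
-/

open MeasureTheory Set Filter

/-- The cumulative distribution function of a measure on ℝ. -/
noncomputable def cdf (P : MeasureTheory.Measure ℝ) (y : ℝ) : ℝ := (P (Set.Iic y)).toReal

/-- The quantile function (generalized inverse cdf) of a measure on ℝ. -/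
noncomputable def quantile (P : MeasureTheory.Measure ℝ) (u : ℝ) : ℝ :=
  sInf {y : ℝ | u ≤ cdf P y}

section Quantile

variable (P : Measure ℝ) [IsProbabilityMeasure P] {u x : ℝ}

lemma cdf_eq_probabilityTheory_cdf : cdf P = ProbabilityTheory.cdf P := by
  ext y
  rw [cdf, ProbabilityTheory.cdf_eq_real, measureReal_def]

lemma cdf_le_one (x : ℝ) : cdf P x ≤ 1 := by
  rw [cdf_eq_probabilityTheory_cdf]
  exact ProbabilityTheory.cdf_le_one P x

lemma nonempty_setOf_le_cdf (hu : u < 1) : {y : ℝ | u ≤ cdf P y}.Nonempty := by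
  rw [cdf_eq_probabilityTheory_cdf]
  exact ((ProbabilityTheory.tendsto_cdf_atTop P).eventually (eventually_ge_nhds hu)).exists

lemma bddBelow_setOf_le_cdf (hu : 0 < u) : BddBelow {y : ℝ | u ≤ cdf P y} := by
  rw [cdf_eq_probabilityTheory_cdf]
  obtain ⟨a, ha⟩ := eventually_atBot.mp
    ((ProbabilityTheory.tendsto_cdf_atBot P).eventually (eventually_lt_nhds hu))
  exact ⟨a, fun y hy => not_lt.mp fun hya => (ha y hya.le).not_ge hy⟩

lemma le_cdf_quantile (hu : u ∈ Ioo 0 1) : u ≤ cdf P (quantile P u) := by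
  have hne := nonempty_setOf_le_cdf P hu.2
  have hbdd := bddBelow_setOf_le_cdf P hu.1
  rw [cdf_eq_probabilityTheory_cdf] at hne hbdd
  rw [quantile, cdf_eq_probabilityTheory_cdf]
  have hcont := ((ProbabilityTheory.cdf P).right_continuous _).mono fun _ hy => csInf_le hbdd hy
  exact isClosed_Ici.closure_subset_iff.mpr (image_subset_iff.mpr fun _ hy => hy)
    (hcont.mem_closure_image (csInf_mem_closure hne hbdd))

lemma quantile_le_iff (hu : u ∈ Ioo 0 1) : quantile P u ≤ x ↔ u ≤ cdf P x := by
  refine ⟨fun h => (le_cdf_quantile P hu).trans ?_, csInf_le (bddBelow_setOf_le_cdf P hu.1)⟩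
  rw [cdf_eq_probabilityTheory_cdf]
  exact ProbabilityTheory.monotone_cdf P h

lemma monotoneOn_quantile : MonotoneOn (quantile P) (Ioo 0 1) := fun _ hu _ hv huv =>
  csInf_le_csInf (bddBelow_setOf_le_cdf P hu.1) (nonempty_setOf_le_cdf P hv.2)
    fun _ hy => huv.trans hy

lemma aemeasurable_quantile : AEMeasurable (quantile P) (volume.restrict (Ioo 0 1)) :=
  aemeasurable_restrict_of_monotoneOn measurableSet_Ioo (monotoneOn_quantile P)

lemma preimage_quantile_Iic_inter_Ioo :
    quantile P ⁻¹' Iic x ∩ Ioo 0 1 = Iic (cdf P x) ∩ Ioo 0 1 := by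
  ext u
  exact and_congr_left (quantile_le_iff P)

end Quantile

lemma volume_Iic_inter_Ioo {t : ℝ} (ht : t ≤ 1) :
    volume (Iic t ∩ Ioo 0 1) = ENNReal.ofReal t := by
  refine le_antisymm ?_ ?_
  · calc volume (Iic t ∩ Ioo 0 1) ≤ volume (Ioc 0 t) :=
          measure_mono fun u hu => ⟨hu.2.1, hu.1⟩
      _ = ENNReal.ofReal t := by rw [Real.volume_Ioc, sub_zero]
  · calc ENNReal.ofReal t = volume (Ioo 0 t) := by rw [Real.volume_Ioo, sub_zero]
      _ ≤ volume (Iic t ∩ Ioo 0 1) :=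
          measure_mono fun u hu => ⟨hu.2.le, hu.1, hu.2.trans_le ht⟩

lemma map_quantile_apply_Iic (P : Measure ℝ) [IsProbabilityMeasure P] (x : ℝ) :
    (volume.restrict (Ioo 0 1)).map (quantile P) (Iic x) = P (Iic x) := by
  rw [Measure.map_apply₀ (aemeasurable_quantile P) measurableSet_Iic.nullMeasurableSet,
    Measure.restrict_apply' measurableSet_Ioo, preimage_quantile_Iic_inter_Ioo,
    volume_Iic_inter_Ioo (cdf_le_one P x), cdf, ENNReal.ofReal_toReal (measure_ne_top P _)]

lemma map_quantile (P : Measure ℝ) [IsProbabilityMeasure P] :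
    (volume.restrict (Ioo 0 1)).map (quantile P) = P :=
  (Measure.ext_of_Iic P _ fun x => (map_quantile_apply_Iic P x).symm).symm

lemma map_quantile_prod_apply_Iic_prod_Iic (P₀ P₁ : Measure ℝ) [IsProbabilityMeasure P₀]
    [IsProbabilityMeasure P₁] (x y : ℝ) :
    (volume.restrict (Ioo 0 1)).map (fun u => (quantile P₀ u, quantile P₁ u)) (Iic x ×ˢ Iic y) =
      ENNReal.ofReal (min (cdf P₀ x) (cdf P₁ y)) := by
  have hpre : (fun u => (quantile P₀ u, quantile P₁ u)) ⁻¹' (Iic x ×ˢ Iic y) ∩ Ioo 0 1 =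
      Iic (min (cdf P₀ x) (cdf P₁ y)) ∩ Ioo 0 1 := by
    rw [mk_preimage_prod, ← Iic_inter_Iic, inter_inter_distrib_right,
      preimage_quantile_Iic_inter_Ioo, preimage_quantile_Iic_inter_Ioo, ← inter_inter_distrib_right]
  rw [Measure.map_apply₀ ((aemeasurable_quantile P₀).prodMk (aemeasurable_quantile P₁))
      (measurableSet_Iic.prod measurableSet_Iic).nullMeasurableSet,
    Measure.restrict_apply' measurableSet_Ioo, hpre,
    volume_Iic_inter_Ioo (min_le_of_left_le (cdf_le_one P₀ x))]

/-- The comonotone coupling is a coupling of P0 and P1 attaining the Fréchet–Hoeffding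
upper bound. -/
theorem comonotone_coupling_attains_upper_bound
    (P0 P1 : Measure ℝ) [IsProbabilityMeasure P0] [IsProbabilityMeasure P1]
    (J : Measure (ℝ × ℝ))
    (hJ : J = (volume.restrict (Ioo (0:ℝ) 1)).map (fun u => (quantile P0 u, quantile P1 u))) :
    J.map Prod.fst = P0 ∧ J.map Prod.snd = P1 ∧
    ∀ x y : ℝ, (J (Iic x ×ˢ Iic y)).toReal = min (cdf P0 x) (cdf P1 y) := by
  have hq := (aemeasurable_quantile P0).prodMk (aemeasurable_quantile P1)
  subst hJ
  refine ⟨?_, ?_, fun x y => ?_⟩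
  · rw [AEMeasurable.map_map_of_aemeasurable measurable_fst.aemeasurable hq]
    exact map_quantile P0
  · rw [AEMeasurable.map_map_of_aemeasurable measurable_snd.aemeasurable hq]
    exact map_quantile P1
  · rw [map_quantile_prod_apply_Iic_prod_Iic, ENNReal.toReal_ofReal]
    exact le_min ENNReal.toReal_nonneg ENNReal.toReal_nonneg
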